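/- For every real t > 0 and every integer n ≥ 4, the finite sequence (g_{n,1}(t), g_{n,2}(t), ..., g_{n,n-1}(t)) is log-concave: g_{n,d}(t)² ≥ g_{n,d-1}(t)·g_{n,d+1}(t) for 2 ≤ d ≤ n-2. -/

import Mathlib

/-!
Extend each row `d ↦ g_{n,d}(t)` by zero to `ℤ`. The column generating function
`F_c(x) = ∑_e g_{c+e+2,e+1}(t) xᵉ` equals `t (1 + t x)ᶜ / (1 - x)ᶜ⁺¹`, so
`(1 - x) F_{c+1} = (1 + t x) F_c`; comparing coefficients gives the recurrence
`g_{n+2,d} = g_{n+1,d-1} + g_{n+1,d} + t g_{n,d-1}`.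
Log-concavity then propagates along the recurrence by induction on `n`, together with two
interlacing inequalities between consecutive rows: `d ↦ g_{n+1,d} / g_{n,d}` is nondecreasing and
`d ↦ g_{n+1,d+1} / g_{n,d}` is nonincreasing. Each inequality at level `n + 2` is a sum, with
coefficients `1`, `t`, `t²`, of inequalities at levels `n` and `n + 1`.
-/

open Polynomial Finset

/-- Speyer's g-polynomial of the uniform matroid `U_{n,d}`, evaluated at `t`. -/
noncomputable def speyerG (n d : ℕ) (t : ℝ) : ℝ :=
  ∑ i ∈ Finset.Icc 1 d,
    ((n - i - 1).choose (d - i) : ℝ) * ((n - d - 1).choose (i - 1) : ℝ) * t ^ i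

/-- The generating polynomial `h_n(x;t) = ∑_{d=1}^{n-1} g_{n,d}(t) x^d` (in `x`). -/
noncomputable def hPoly (n : ℕ) (t : ℝ) : Polynomial ℝ :=
  ∑ d ∈ Finset.Icc 1 (n - 1), Polynomial.C (speyerG n d t) * Polynomial.X ^ d

open PowerSeries

structure PositiveOnIco (f : ℤ → ℝ) (m : ℤ) : Prop where
  pos : ∀ ⦃d⦄, 1 ≤ d → d < m → 0 < f d
  eq_zero : ∀ ⦃d⦄, d < 1 ∨ m ≤ d → f d = 0

def LogConcaveSeq (f : ℤ → ℝ) : Prop :=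
  ∀ d, f (d - 1) * f (d + 1) ≤ f d ^ 2

/-- `d ↦ v d / u d` is nondecreasing and `d ↦ v (d + 1) / u d` is nonincreasing,
with denominators cleared. -/
structure Interlaces (v u : ℤ → ℝ) : Prop where
  ratio_mono : ∀ d, v (d - 1) * u d ≤ v d * u (d - 1)
  shift_ratio_anti : ∀ d, v d * u (d - 2) ≤ v (d - 1) * u (d - 1)

section sequences

variable {f u v w : ℤ → ℝ} {m : ℤ} {t : ℝ}

lemma PositiveOnIco.nonneg (hf : PositiveOnIco f m) (d : ℤ) : 0 ≤ f d := by
  by_cases h : 1 ≤ d ∧ d < m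
  · exact (hf.pos h.1 h.2).le
  · exact (hf.eq_zero (by omega)).ge

lemma PositiveOnIco.logConcaveSeq (hf : PositiveOnIco f m) (hm : m ≤ 2) : LogConcaveSeq f := by
  intro d
  rcases le_or_gt d 1 with h | h
  · rw [hf.eq_zero (by omega : d - 1 < 1 ∨ m ≤ d - 1), zero_mul]; positivity
  · rw [hf.eq_zero (by omega : d + 1 < 1 ∨ m ≤ d + 1), mul_zero]; positivity

lemma LogConcaveSeq.sub_two_mul_add_one_le (hlc : LogConcaveSeq f) (hf : PositiveOnIco f m)
    (d : ℤ) : f (d - 2) * f (d + 1) ≤ f (d - 1) * f d := by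
  have hrhs := mul_nonneg (hf.nonneg (d - 1)) (hf.nonneg d)
  by_cases h : 1 ≤ d - 1 ∧ d < m
  · refine le_of_mul_le_mul_right ?_ (mul_pos (hf.pos h.1 (by omega)) (hf.pos (by omega) h.2))
    linear_combination (norm := (ring_nf; rfl))
      mul_le_mul (hlc (d - 1)) (hlc d) (mul_nonneg (hf.nonneg _) (hf.nonneg _)) (sq_nonneg _)
  · rcases (by omega : d - 2 < 1 ∨ m ≤ d + 1) with h' | h'
    · rwa [hf.eq_zero (.inl h'), zero_mul]
    · rwa [hf.eq_zero (.inr h'), mul_zero]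

lemma Interlaces.sub_one_mul_add_one_le (hvu : Interlaces v u) (hu : PositiveOnIco u m)
    (hv : PositiveOnIco v (m + 1)) (hlu : LogConcaveSeq u) (d : ℤ) :
    v (d - 1) * u (d + 1) ≤ v d * u d := by
  have hrhs := mul_nonneg (hv.nonneg d) (hu.nonneg d)
  by_cases h : 1 ≤ d ∧ d < m
  · refine le_of_mul_le_mul_right ?_ (hu.pos h.1 h.2)
    linear_combination mul_le_mul_of_nonneg_right (hvu.ratio_mono d) (hu.nonneg (d + 1))
      + mul_le_mul_of_nonneg_left (hlu d) (hv.nonneg d)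
  · rcases (by omega : d - 1 < 1 ∨ m ≤ d + 1) with h' | h'
    · rwa [hv.eq_zero (.inl h'), zero_mul]
    · rwa [hu.eq_zero (.inr h'), mul_zero]

lemma Interlaces.add_one_mul_sub_two_le (hvu : Interlaces v u) (hu : PositiveOnIco u m)
    (hv : PositiveOnIco v (m + 1)) (hlu : LogConcaveSeq u) (d : ℤ) :
    v (d + 1) * u (d - 2) ≤ v d * u (d - 1) := by
  have hrhs := mul_nonneg (hv.nonneg d) (hu.nonneg (d - 1))
  by_cases h : 1 ≤ d - 1 ∧ d - 1 < m
  · refine le_of_mul_le_mul_right ?_ (hu.pos h.1 h.2)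
    linear_combination (norm := (ring_nf; rfl))
      mul_le_mul_of_nonneg_right (hvu.shift_ratio_anti (d + 1)) (hu.nonneg (d - 2))
      + mul_le_mul_of_nonneg_left (hlu (d - 1)) (hv.nonneg d)
  · rcases (by omega : d - 2 < 1 ∨ m + 1 ≤ d + 1) with h' | h'
    · rwa [hu.eq_zero (.inl h'), mul_zero]
    · rwa [hv.eq_zero (.inr h'), zero_mul]

lemma Interlaces.of_recurrence (ht : 0 ≤ t) (hw : ∀ d, w d = v (d - 1) + v d + t * u (d - 1))
    (hlv : LogConcaveSeq v) (hvu : Interlaces v u) : Interlaces w v := by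
  constructor <;> intro d <;> rw [hw d, hw (d - 1)]
  · linear_combination (norm := (ring_nf; rfl))
      hlv (d - 1) + mul_le_mul_of_nonneg_left (hvu.shift_ratio_anti d) ht
  · linear_combination (norm := (ring_nf; rfl))
      hlv (d - 1) + mul_le_mul_of_nonneg_left (hvu.ratio_mono (d - 1)) ht

lemma LogConcaveSeq.of_recurrence (ht : 0 ≤ t) (hu : PositiveOnIco u m)
    (hv : PositiveOnIco v (m + 1)) (hw : ∀ d, w d = v (d - 1) + v d + t * u (d - 1))
    (hlu : LogConcaveSeq u) (hlv : LogConcaveSeq v) (hvu : Interlaces v u) :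
    LogConcaveSeq w := by
  intro d
  rw [hw (d - 1), hw d, hw (d + 1)]
  linear_combination (norm := (ring_nf; rfl))
    hlv (d - 1) + hlv d + hlv.sub_two_mul_add_one_le hv d
    + mul_le_mul_of_nonneg_left (hlu (d - 1)) (sq_nonneg t)
    + mul_le_mul_of_nonneg_left (hvu.shift_ratio_anti d) ht
    + mul_le_mul_of_nonneg_left (hvu.add_one_mul_sub_two_le hu hv hlu d) ht
    + mul_le_mul_of_nonneg_left (hvu.sub_one_mul_add_one_le hu hv hlu (d - 1)) ht
    + mul_le_mul_of_nonneg_left (hvu.ratio_mono d) ht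

end sequences

noncomputable def speyerSeries (t : ℝ) (c : ℕ) : ℝ⟦X⟧ :=
  PowerSeries.C t * (1 + PowerSeries.C t * PowerSeries.X) ^ c * (invOneSubPow ℝ (c + 1) : ℝ⟦X⟧)

lemma coeff_one_add_C_mul_X_pow {R : Type*} [CommRing R] (t : R) (c k : ℕ) :
    PowerSeries.coeff k ((1 + PowerSeries.C t * PowerSeries.X : R⟦X⟧) ^ c)
      = c.choose k * t ^ k := by
  have : (1 + PowerSeries.C t * PowerSeries.X : R⟦X⟧) ^ c
      = rescale t (((1 + Polynomial.X) ^ c : R[X]) : R⟦X⟧) := by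
    simp
  rw [this, coeff_rescale, Polynomial.coeff_coe, Polynomial.coeff_one_add_X_pow, mul_comm]

lemma one_sub_X_mul_speyerSeries_succ (t : ℝ) (c : ℕ) :
    (1 - PowerSeries.X) * speyerSeries t (c + 1)
      = (1 + PowerSeries.C t * PowerSeries.X) * speyerSeries t c := by
  rw [speyerSeries, speyerSeries,
    ← one_sub_pow_mul_invOneSubPow_val_add_eq_invOneSubPow_val ℝ (c + 1) 1]
  ring

lemma coeff_speyerSeries (t : ℝ) (c e : ℕ) :
    PowerSeries.coeff e (speyerSeries t c) = speyerG (c + e + 2) (e + 1) t := by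
  rw [speyerSeries, mul_assoc, PowerSeries.coeff_C_mul, PowerSeries.coeff_mul,
    Nat.sum_antidiagonal_eq_sum_range_succ_mk, speyerG, ← Ico_add_one_right_eq_Icc, sum_Ico_eq_sum_range, mul_sum]
  refine sum_congr rfl fun k hk => ?_
  have hk : k ≤ e := Nat.lt_succ_iff.mp (mem_range.mp hk)
  rw [coeff_one_add_C_mul_X_pow, invOneSubPow_val_succ_eq_mk_add_choose, coeff_mk,
    show c + e + 2 - (1 + k) - 1 = c + (e - k) by omega, show e + 1 - (1 + k) = e - k by omega,
    show c + e + 2 - (e + 1) - 1 = c by omega, add_tsub_cancel_left, Nat.choose_symm_add]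
  ring

lemma speyerG_add_four_add_two (t : ℝ) (c e : ℕ) :
    speyerG (c + e + 4) (e + 2) t
      = speyerG (c + e + 3) (e + 1) t + speyerG (c + e + 3) (e + 2) t
        + t * speyerG (c + e + 2) (e + 1) t := by
  have h := congrArg (PowerSeries.coeff (e + 1)) (one_sub_X_mul_speyerSeries_succ t c)
  simp only [sub_mul, add_mul, one_mul, map_sub, map_add, mul_assoc, coeff_succ_X_mul,
    PowerSeries.coeff_C_mul, coeff_speyerSeries] at h
  rw [show c + 1 + (e + 1) + 2 = c + e + 4 by ring, show c + 1 + e + 2 = c + e + 3 by ring,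
    show c + (e + 1) + 2 = c + e + 3 by ring] at h
  linarith

lemma speyerG_one (n : ℕ) (t : ℝ) : speyerG n 1 t = t := by
  simp [speyerG]

lemma speyerG_add_one_self (n : ℕ) (t : ℝ) : speyerG (n + 2) (n + 1) t = t := by
  rw [speyerG, sum_eq_single_of_mem 1 (by simp)]
  · simp
  · intro i hi hi1
    rw [mem_Icc] at hi
    rw [show n + 2 - (n + 1) - 1 = 0 by omega, Nat.choose_eq_zero_of_lt (by omega : 0 < i - 1)]
    simp

lemma speyerG_pos {n d : ℕ} {t : ℝ} (ht : 0 < t) (h1 : 1 ≤ d) (h2 : d < n) :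
    0 < speyerG n d t := by
  refine sum_pos' (fun i _ => by positivity) ⟨1, by simp [h1], ?_⟩
  have : 0 < (n - 1 - 1).choose (d - 1) := Nat.choose_pos (by omega)
  simp only [Nat.sub_self, Nat.choose_zero_right, Nat.cast_one, mul_one, pow_one]
  positivity

noncomputable def speyerRow (n : ℕ) (t : ℝ) (d : ℤ) : ℝ :=
  if 1 ≤ d ∧ d < n then speyerG n d.toNat t else 0

section speyerRow

variable {n : ℕ} {t : ℝ}

lemma speyerRow_natCast {d : ℕ} (h1 : 1 ≤ d) (h2 : d < n) : speyerRow n t d = speyerG n d t := by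
  rw [speyerRow, if_pos (by omega), Int.toNat_natCast]

lemma speyerRow_eq_zero {d : ℤ} (h : d < 1 ∨ n ≤ d) : speyerRow n t d = 0 := by
  rw [speyerRow, if_neg (by omega)]

lemma positiveOnIco_speyerRow (ht : 0 < t) : PositiveOnIco (speyerRow n t) n :=
  ⟨fun d h1 h2 => by rw [speyerRow, if_pos ⟨h1, h2⟩]; exact speyerG_pos ht (by omega) (by omega),
    fun _ h => speyerRow_eq_zero h⟩

lemma speyerRow_add_two (hn : 1 ≤ n) (d : ℤ) :
    speyerRow (n + 2) t d
      = speyerRow (n + 1) t (d - 1) + speyerRow (n + 1) t d + t * speyerRow n t (d - 1) := by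
  rcases lt_or_ge d 1 with hd | hd
  · simp (disch := omega) only [speyerRow_eq_zero]
    ring
  obtain ⟨k, rfl⟩ : ∃ k : ℕ, d = k + 1 := ⟨(d - 1).toNat, by omega⟩
  rw [add_sub_cancel_right, ← Nat.cast_succ]
  rcases lt_trichotomy k n with hkn | rfl | hkn
  · rcases Nat.eq_zero_or_pos k with rfl | hk
    · simp (disch := omega) only [speyerRow_natCast, speyerRow_eq_zero, speyerG_one]
      ring
    obtain ⟨e, rfl⟩ : ∃ e, k = e + 1 := ⟨k - 1, by omega⟩
    obtain ⟨c, rfl⟩ : ∃ c, n = c + e + 2 := ⟨n - e - 2, by omega⟩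
    simp (disch := omega) only [speyerRow_natCast]
    exact speyerG_add_four_add_two t c e
  · obtain ⟨m, rfl⟩ : ∃ m, k = m + 1 := ⟨k - 1, by omega⟩
    simp (disch := omega) only [speyerRow_natCast, speyerRow_eq_zero, speyerG_add_one_self]
    ring
  · simp (disch := omega) only [speyerRow_eq_zero]
    ring

lemma speyerRow_logConcaveSeq_interlaces (ht : 0 < t) (hn : 1 ≤ n) :
    LogConcaveSeq (speyerRow n t) ∧ LogConcaveSeq (speyerRow (n + 1) t) ∧
      Interlaces (speyerRow (n + 1) t) (speyerRow n t) := by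
  induction n, hn using Nat.le_induction with
  | base =>
    refine ⟨(positiveOnIco_speyerRow ht).logConcaveSeq (by norm_num),
      (positiveOnIco_speyerRow ht).logConcaveSeq (by norm_num), ?_⟩
    constructor <;> intro d <;> simp (disch := omega) [speyerRow_eq_zero (n := 1)]
  | succ n hn ih =>
    obtain ⟨hlu, hlv, hvu⟩ := ih
    have hv : PositiveOnIco (speyerRow (n + 1) t) (n + 1) := by
      exact_mod_cast positiveOnIco_speyerRow ht
    exact ⟨hlv, .of_recurrence ht.le (positiveOnIco_speyerRow ht) hv (speyerRow_add_two hn)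
      hlu hlv hvu, .of_recurrence ht.le (speyerRow_add_two hn) hlv hvu⟩

lemma logConcaveSeq_speyerRow (ht : 0 < t) (n : ℕ) : LogConcaveSeq (speyerRow n t) := by
  rcases Nat.lt_or_ge n 2 with hn | hn
  · exact (positiveOnIco_speyerRow ht).logConcaveSeq (by omega)
  · obtain ⟨m, rfl⟩ : ∃ m, n = m + 1 := ⟨n - 1, by omega⟩
    exact (speyerRow_logConcaveSeq_interlaces ht (by omega)).2.1

end speyerRow

theorem speyerG_log_concave_general (t : ℝ) (ht : 0 < t) (n : ℕ) :
    ∀ d : ℕ, 2 ≤ d → d ≤ n - 2 →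
      speyerG n (d - 1) t * speyerG n (d + 1) t ≤ (speyerG n d t) ^ 2 := by
  intro d hd hdn
  have h := logConcaveSeq_speyerRow ht n d
  rw [← Nat.cast_pred (by omega), ← Nat.cast_succ] at h
  simpa (disch := omega) only [speyerRow_natCast] using h

theorem speyerG_log_concave (t : ℝ) (ht : 0 < t) (n : ℕ) (hn : 4 ≤ n) :
    ∀ d : ℕ, 2 ≤ d → d ≤ n - 2 →
      speyerG n (d - 1) t * speyerG n (d + 1) t ≤ (speyerG n d t) ^ 2 :=
  speyerG_log_concave_general t ht n
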